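/- arXiv:2405.04193 — 2 statements merged into one kernel-verified Lean document; each statement's English description precedes it below -/
import Mathlib

section
/- (Theorem 2.) A positive probability vector π on cells i : Fin T → Fin r satisfies complete symmetry (S) if and only if π satisfies both the OQS[f] model and the marginal moment equality (ME) model. -/
/-- The orbit `A(i)` of a cell `i : Fin T → Fin r` under the action of the
symmetric group on `Fin T` permuting coordinates (`σ · i = i ∘ σ`). -/
def cellOrbit (r T : ℕ) (i : Fin T → Fin r) : Finset (Fin T → Fin r) :=
  Finset.univ.filter (fun j => ∃ σ : Equiv.Perm (Fin T), j = i ∘ σ)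

/-- The orbit average `π^S(i) = (1/#A(i)) ∑_{j ∈ A(i)} π(j)`. -/
noncomputable def orbitAvg (r T : ℕ) (π : (Fin T → Fin r) → ℝ) (i : Fin T → Fin r) : ℝ :=
  (∑ j ∈ cellOrbit r T i, π j) / ((cellOrbit r T i).card : ℝ)


/-!
Write `a = π^S`. It is symmetric, and orbit averaging preserves sums against symmetric weights:
`∑ a h = ∑ π h`. The marginal means of a symmetric `a` are all equal, hence equal to their
average, which is the sum of `a` against the symmetric weight `i ↦ ∑ₜ u(iₜ)`; so under (ME)
`a` and `π` have the same marginal means. Under OQS[f], `F(π/a)` is a linear combination of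
marginal scores plus a symmetric function, so `∑ (π - a) (F(π/a) - F(1)) = 0`. As `F` is
strictly increasing, every summand is positive unless `π = a`; hence `π = a` is symmetric.
-/

open Finset

def IsCompletelySymmetric {ι α β : Type*} (g : (ι → α) → β) : Prop :=
  ∀ (i : ι → α) (σ : Equiv.Perm ι), g (i ∘ σ) = g i

def marginalMean {ι α : Type*} [Fintype ι] [DecidableEq ι] [Fintype α]
    (u : α → ℝ) (π : (ι → α) → ℝ) (t : ι) : ℝ :=
  ∑ i, u (i t) * π i

def HasEqualMarginalMeans {ι α : Type*} [Fintype ι] [DecidableEq ι] [Fintype α]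
    (u : α → ℝ) (π : (ι → α) → ℝ) : Prop :=
  ∀ s t, marginalMean u π s = marginalMean u π t

def IsOQS {r T : ℕ} (f : ℝ → ℝ) (u : Fin r → ℝ) (π : (Fin T → Fin r) → ℝ) : Prop :=
  ∃ (β : Fin T → ℝ) (ψ : (Fin T → Fin r) → ℝ), IsCompletelySymmetric ψ ∧
    ∀ i, deriv f (π i / orbitAvg r T π i) = (∑ t, β t * u (i t)) + ψ i

section Symmetric

variable {ι α : Type*}

lemma IsCompletelySymmetric.sub_const {g : (ι → α) → ℝ} (hg : IsCompletelySymmetric g)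
    (c : ℝ) : IsCompletelySymmetric (fun i => g i - c) :=
  fun i σ => by simp only [hg i σ]

lemma isCompletelySymmetric_sum_comp [Fintype ι] (u : α → ℝ) :
    IsCompletelySymmetric (fun i : ι → α => ∑ t, u (i t)) :=
  fun i σ => Equiv.sum_comp σ (fun t => u (i t))

variable [Fintype ι] [DecidableEq ι] [Fintype α]

lemma IsCompletelySymmetric.hasEqualMarginalMeans {π : (ι → α) → ℝ}
    (hπ : IsCompletelySymmetric π) (u : α → ℝ) : HasEqualMarginalMeans u π := by
  intro s t
  refine Fintype.sum_equiv ((Equiv.swap s t).arrowCongr (Equiv.refl α)) _ _ fun i => ?_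
  have hswap : (Equiv.swap s t).arrowCongr (Equiv.refl α) i = i ∘ Equiv.swap s t := by
    ext; simp [Equiv.arrowCongr_apply]
  rw [hswap, hπ, Function.comp_apply, Equiv.swap_apply_right]

lemma IsCompletelySymmetric.marginalMean_eq_sum_div {π : (ι → α) → ℝ}
    (hπ : IsCompletelySymmetric π) (u : α → ℝ) (t : ι) :
    marginalMean u π t = (∑ i, (∑ s, u (i s)) * π i) / Fintype.card ι := by
  have hcard : (Fintype.card ι : ℝ) ≠ 0 := by
    have : Nonempty ι := ⟨t⟩
    positivity
  rw [eq_div_iff hcard, mul_comm, ← nsmul_eq_mul, ← card_univ, ← sum_const]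
  simp only [sum_mul]
  rw [sum_comm]
  exact sum_congr rfl fun s _ => hπ.hasEqualMarginalMeans u s t ▸ rfl

end Symmetric

section Orbit

variable {r T : ℕ}

@[simp]
lemma mem_cellOrbit {i j : Fin T → Fin r} :
    j ∈ cellOrbit r T i ↔ ∃ σ : Equiv.Perm (Fin T), j = i ∘ σ := by
  simp [cellOrbit]

lemma mem_cellOrbit_self (i : Fin T → Fin r) : i ∈ cellOrbit r T i :=
  mem_cellOrbit.2 ⟨1, rfl⟩

lemma cellOrbit_comp (i : Fin T → Fin r) (σ : Equiv.Perm (Fin T)) :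
    cellOrbit r T (i ∘ σ) = cellOrbit r T i := by
  ext j
  simp only [mem_cellOrbit]
  constructor
  · rintro ⟨τ, rfl⟩; exact ⟨τ.trans σ, rfl⟩
  · rintro ⟨τ, rfl⟩; exact ⟨τ.trans σ.symm, by ext; simp⟩

lemma cellOrbit_eq_of_mem {i j : Fin T → Fin r} (h : j ∈ cellOrbit r T i) :
    cellOrbit r T j = cellOrbit r T i := by
  obtain ⟨σ, rfl⟩ := mem_cellOrbit.1 h
  exact cellOrbit_comp i σ

lemma mem_cellOrbit_comm {i j : Fin T → Fin r} :
    j ∈ cellOrbit r T i ↔ i ∈ cellOrbit r T j :=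
  ⟨fun h => cellOrbit_eq_of_mem h ▸ mem_cellOrbit_self i,
    fun h => cellOrbit_eq_of_mem h ▸ mem_cellOrbit_self j⟩

lemma IsCompletelySymmetric.eq_of_mem_cellOrbit {β : Type*} {g : (Fin T → Fin r) → β}
    (hg : IsCompletelySymmetric g) {i j : Fin T → Fin r} (h : j ∈ cellOrbit r T i) :
    g j = g i := by
  obtain ⟨σ, rfl⟩ := mem_cellOrbit.1 h
  exact hg i σ

lemma cellOrbit_card_ne_zero (i : Fin T → Fin r) : ((cellOrbit r T i).card : ℝ) ≠ 0 :=
  Nat.cast_ne_zero.2 (card_ne_zero_of_mem (mem_cellOrbit_self i))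

lemma isCompletelySymmetric_orbitAvg (π : (Fin T → Fin r) → ℝ) :
    IsCompletelySymmetric (orbitAvg r T π) :=
  fun i σ => by simp only [orbitAvg, cellOrbit_comp]

lemma orbitAvg_pos {π : (Fin T → Fin r) → ℝ} (hπ : ∀ i, 0 < π i) (i : Fin T → Fin r) :
    0 < orbitAvg r T π i :=
  div_pos (sum_pos (fun j _ => hπ j) ⟨i, mem_cellOrbit_self i⟩)
    (Nat.cast_pos.2 (card_pos.2 ⟨i, mem_cellOrbit_self i⟩))

lemma IsCompletelySymmetric.orbitAvg_eq {π : (Fin T → Fin r) → ℝ}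
    (hπ : IsCompletelySymmetric π) (i : Fin T → Fin r) : orbitAvg r T π i = π i := by
  rw [orbitAvg, sum_congr rfl fun j hj => hπ.eq_of_mem_cellOrbit hj, sum_const, nsmul_eq_mul,
    mul_div_cancel_left₀ _ (cellOrbit_card_ne_zero i)]

lemma sum_orbitAvg_mul (π : (Fin T → Fin r) → ℝ) {h : (Fin T → Fin r) → ℝ}
    (hh : IsCompletelySymmetric h) :
    ∑ i, orbitAvg r T π i * h i = ∑ i, π i * h i := by
  calc ∑ i, orbitAvg r T π i * h i
      = ∑ i, ∑ j ∈ cellOrbit r T i, π j * h i / (cellOrbit r T i).card := by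
        simp only [orbitAvg, div_mul_eq_mul_div, sum_mul, sum_div]
    _ = ∑ j, ∑ i ∈ cellOrbit r T j, π j * h j / (cellOrbit r T j).card := by
        refine sum_comm' (fun i j => ?_) |>.trans
          (sum_congr rfl fun j _ => sum_congr rfl fun i hi => ?_)
        · simp only [mem_univ, true_and, and_true, mem_cellOrbit_comm]
        · rw [hh.eq_of_mem_cellOrbit hi, cellOrbit_eq_of_mem hi]
    _ = ∑ j, π j * h j := by
        refine sum_congr rfl fun j _ => ?_
        rw [sum_const, nsmul_eq_mul, mul_div_cancel₀ _ (cellOrbit_card_ne_zero j)]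

lemma sum_sub_orbitAvg_mul_eq_zero (π : (Fin T → Fin r) → ℝ) {h : (Fin T → Fin r) → ℝ}
    (hh : IsCompletelySymmetric h) :
    ∑ i, (π i - orbitAvg r T π i) * h i = 0 := by
  simp only [sub_mul, sum_sub_distrib, sum_orbitAvg_mul π hh, sub_self]

lemma HasEqualMarginalMeans.marginalMean_orbitAvg {u : Fin r → ℝ} {π : (Fin T → Fin r) → ℝ}
    (hME : HasEqualMarginalMeans u π) (t : Fin T) :
    marginalMean u (orbitAvg r T π) t = marginalMean u π t := by
  have hcard : (Fintype.card (Fin T) : ℝ) ≠ 0 := by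
    have : Nonempty (Fin T) := ⟨t⟩
    positivity
  simp only [(isCompletelySymmetric_orbitAvg π).marginalMean_eq_sum_div,
    mul_comm _ (orbitAvg r T π _), sum_orbitAvg_mul π (isCompletelySymmetric_sum_comp u)]
  rw [div_eq_iff hcard, mul_comm, ← nsmul_eq_mul, ← card_univ, ← sum_const]
  simp only [mul_sum]
  rw [sum_comm]
  exact sum_congr rfl fun s _ => by rw [← hME s t]; exact sum_congr rfl fun i _ => by ring

lemma HasEqualMarginalMeans.sum_sub_orbitAvg_mul_eq_zero {u : Fin r → ℝ}
    {π : (Fin T → Fin r) → ℝ} (hME : HasEqualMarginalMeans u π) (β : Fin T → ℝ) :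
    ∑ i, (π i - orbitAvg r T π i) * ∑ t, β t * u (i t) = 0 := by
  calc ∑ i, (π i - orbitAvg r T π i) * ∑ t, β t * u (i t)
      = ∑ t, β t * (marginalMean u π t - marginalMean u (orbitAvg r T π) t) := by
        simp only [marginalMean, mul_sum, ← sum_sub_distrib]
        rw [sum_comm]
        exact sum_congr rfl fun t _ => sum_congr rfl fun i _ => by ring
    _ = 0 := by simp only [hME.marginalMean_orbitAvg, sub_self, mul_zero, sum_const_zero]

end Orbit

lemma sub_mul_sub_pos_of_ne {F : ℝ → ℝ} (hF : StrictMonoOn F (Set.Ioi 0)) {p a : ℝ}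
    (hp : 0 < p) (ha : 0 < a) (hne : p ≠ a) : 0 < (p - a) * (F (p / a) - F 1) := by
  rcases hne.lt_or_gt with h | h
  · exact mul_pos_of_neg_of_neg (sub_neg.2 h)
      (sub_neg.2 (hF (div_pos hp ha) (Set.mem_Ioi.2 one_pos) ((div_lt_one ha).2 h)))
  · exact mul_pos (sub_pos.2 h)
      (sub_pos.2 (hF (Set.mem_Ioi.2 one_pos) (div_pos hp ha) ((one_lt_div ha).2 h)))

lemma eq_of_sum_sub_mul_sub_eq_zero {ι : Type*} [Fintype ι] {F : ℝ → ℝ}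
    (hF : StrictMonoOn F (Set.Ioi 0)) {p a : ι → ℝ} (hp : ∀ i, 0 < p i) (ha : ∀ i, 0 < a i)
    (h : ∑ i, (p i - a i) * (F (p i / a i) - F 1) = 0) : p = a := by
  have hnonneg : ∀ i, 0 ≤ (p i - a i) * (F (p i / a i) - F 1) := fun i => by
    by_cases hi : p i = a i
    · simp [hi]
    · exact (sub_mul_sub_pos_of_ne hF (hp i) (ha i) hi).le
  funext i
  by_contra hi
  exact (sub_mul_sub_pos_of_ne hF (hp i) (ha i) hi).ne'
    ((sum_eq_zero_iff_of_nonneg fun i _ => hnonneg i).1 h i (mem_univ i))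

section Model

variable {r T : ℕ} {f : ℝ → ℝ} {u : Fin r → ℝ} {π : (Fin T → Fin r) → ℝ}

lemma IsCompletelySymmetric.isOQS (hπ : IsCompletelySymmetric π) (hpos : ∀ i, 0 < π i)
    (f : ℝ → ℝ) (u : Fin r → ℝ) : IsOQS f u π :=
  ⟨0, fun _ => deriv f 1, fun _ _ => rfl, fun i => by
    simp [hπ.orbitAvg_eq, div_self (hpos i).ne']⟩

lemma IsOQS.isCompletelySymmetric (hOQS : IsOQS f u π) (hME : HasEqualMarginalMeans u π)
    (hF : StrictMonoOn (deriv f) (Set.Ioi 0)) (hpos : ∀ i, 0 < π i) :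
    IsCompletelySymmetric π := by
  obtain ⟨β, ψ, hψ, hπψ⟩ := hOQS
  have key : ∑ i, (π i - orbitAvg r T π i) *
      (deriv f (π i / orbitAvg r T π i) - deriv f 1) = 0 := by
    simp only [hπψ, add_sub_assoc, mul_add, sum_add_distrib,
      hME.sum_sub_orbitAvg_mul_eq_zero β, sum_sub_orbitAvg_mul_eq_zero π (hψ.sub_const _),
      add_zero]
  rw [eq_of_sum_sub_mul_sub_eq_zero hF hpos (orbitAvg_pos hpos) key]
  exact isCompletelySymmetric_orbitAvg π

end Model

/-- Theorem 2: a positive probability vector `π` satisfies complete symmetry (S) if and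
only if it satisfies both the OQS[f] model and the marginal moment equality (ME) model. -/
theorem completeSymmetry_iff_OQSf_and_ME
    (r T : ℕ)
    (u : Fin r → ℝ)
    (f : ℝ → ℝ) (hconv : StrictConvexOn ℝ (Set.Ioi 0) f)
    (hdiff : ∀ x ∈ Set.Ioi (0 : ℝ), DifferentiableAt ℝ f x)
    (π : (Fin T → Fin r) → ℝ) (hpos : ∀ i, 0 < π i) :
    -- complete symmetry (S)
    (∀ (i : Fin T → Fin r) (σ : Equiv.Perm (Fin T)), π (i ∘ σ) = π i) ↔
      -- the OQS[f] model (with F = f′)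
      ((∃ (β : Fin T → ℝ) (ψ : (Fin T → Fin r) → ℝ),
        (∀ (i : Fin T → Fin r) (σ : Equiv.Perm (Fin T)), ψ (i ∘ σ) = ψ i) ∧
        ∀ i : Fin T → Fin r,
          deriv f (π i / orbitAvg r T π i) = (∑ t, β t * u (i t)) + ψ i) ∧
      -- and the ME model
      (∀ s t : Fin T, ∑ i, u (i s) * π i = ∑ i, u (i t) * π i)) :=
  ⟨fun hπ => ⟨IsCompletelySymmetric.isOQS hπ hpos f u,
      IsCompletelySymmetric.hasEqualMarginalMeans hπ u⟩,
    fun ⟨hOQS, hME⟩ =>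
      IsOQS.isCompletelySymmetric hOQS hME (hconv.strictMonoOn_deriv hdiff) hpos⟩
end

section
/- Let T = 3 and let π be a positive probability vector on cells (i,j,k) ∈ (Fin r)³ satisfying complete symmetry. Assume f is twice differentiable on (0,∞) with F = f′. Let J denote the Jacobian matrix at π of the map G defined by G(π)(i,j,k) = F(π(i,j,k)/π^S(i,j,k)) (π^S the orbit average), let Σ(π) = D(π) − π πᵀ be the multinomial covariance matrix (D(π) the diagonal matrix with entries π), and let W be the 2 × r³ matrix whose rows are x₁ and x₂, where x₁(i,j,k) = u(i) − u(k) and x₂(i,j,k) = u(j) − u(k). Let S(X) be the linear span in ℝ^{r³} of x₁, x₂, and the orbit indicator vectors e_O (e_O(i,j,k) = 1 if (i,j,k) lies in the orbit O and 0 otherwise). Then for every vector v ∈ ℝ^{r³} orthogonal to S(X), one has vᵀ J Σ(π) Wᵀ = 0; i.e., under the complete symmetry model H₁(π) Σ(π) H₂ᵀ(π) is the zero matrix. -/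
/-!
Because π is constant on orbits, every ratio π/π^S equals 1 at π, and the chain rule gives
`J = F'(1) · D(π)⁻¹ (I - P)`, where `P` is the orbit-averaging matrix. Orthogonality of `v` to the
orbit indicators kills the `P` part, so `vᵀ J = F'(1) (v/π)ᵀ`, and then
`(v/π)ᵀ Σ(π) = v - (∑ v) π = v` since the orbit sums, hence the total sum, of `v` vanish.
Finally `v Wᵀ = 0` because `v` is orthogonal to `x₁` and `x₂`.
-/

/-- The orbit `A((i,j,k))` of a cell of an `r³` table: all coordinate permutations. -/
def A3 {r : ℕ} (c : Fin r × Fin r × Fin r) : Finset (Fin r × Fin r × Fin r) :=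
  {(c.1, c.2.1, c.2.2), (c.1, c.2.2, c.2.1), (c.2.1, c.1, c.2.2),
   (c.2.1, c.2.2, c.1), (c.2.2, c.1, c.2.1), (c.2.2, c.2.1, c.1)}

/-- The orbit average `π^S(i,j,k) = (1/#A((i,j,k))) ∑_{(s,t,u) ∈ A((i,j,k))} π(s,t,u)`. -/
noncomputable def orbitAvg3 {r : ℕ} (π : Fin r × Fin r × Fin r → ℝ)
    (c : Fin r × Fin r × Fin r) : ℝ :=
  (∑ p ∈ A3 c, π p) / ((A3 c).card : ℝ)

open Finset Matrix

theorem mem_A3_self {r : ℕ} (c : Fin r × Fin r × Fin r) : c ∈ A3 c := by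
  simp [A3]

theorem mem_A3_iff_A3_eq {r : ℕ} {p c : Fin r × Fin r × Fin r} : p ∈ A3 c ↔ A3 p = A3 c := by
  refine ⟨fun h => ?_, fun h => h ▸ mem_A3_self p⟩
  obtain ⟨a, b, d⟩ := c
  simp only [A3, mem_insert, mem_singleton] at h
  rcases h with rfl | rfl | rfl | rfl | rfl | rfl <;> ext q <;>
    simp only [A3, mem_insert, mem_singleton] <;> tauto

theorem sum_div_card_eq_of_forall_eq {ι : Type*} {s : Finset ι} {π : ι → ℝ} {c : ι} (hc : c ∈ s)
    (hs : ∀ q ∈ s, π q = π c) : (∑ q ∈ s, π q) / #s = π c := by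
  have hcard : (#s : ℝ) ≠ 0 := by exact_mod_cast (card_pos.2 ⟨c, hc⟩).ne'
  rw [sum_congr rfl hs, sum_const, nsmul_eq_mul, mul_div_cancel_left₀ _ hcard]

section Derivative

variable {ι : Type*} [DecidableEq ι] {s : Finset ι} {π : ι → ℝ} {c : ι}

theorem hasDerivAt_div_avg_update (hc : c ∈ s) (hs : ∀ q ∈ s, π q = π c) (hπ : π c ≠ 0)
    (p : ι) :
    HasDerivAt (fun x => Function.update π p x c / ((∑ q ∈ s, Function.update π p x q) / #s))
      ((π c)⁻¹ * ((if c = p then 1 else 0) - if p ∈ s then (#s : ℝ)⁻¹ else 0)) (π p) := by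
  have hupd : ∀ q, HasDerivAt (fun x => Function.update π p x q) (if q = p then 1 else 0) (π p) :=
    fun q => by simpa [Pi.single_apply] using hasDerivAt_pi.1 (hasDerivAt_update π p (π p)) q
  have havg := sum_div_card_eq_of_forall_eq hc hs
  have hden := (HasDerivAt.fun_sum (u := s) fun q _ => hupd q).div_const (#s : ℝ)
  refine ((hupd c).div hden (by simpa using havg.trans_ne hπ)).congr_deriv ?_
  simp only [Function.update_eq_self, havg, sum_ite_eq', ite_div]
  field_simp
  split_ifs <;> ring

theorem deriv_comp_div_avg_update {F : ℝ → ℝ} (hF : DifferentiableAt ℝ F 1) (hc : c ∈ s)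
    (hs : ∀ q ∈ s, π q = π c) (hπ : π c ≠ 0) (p : ι) :
    deriv (fun x => F (Function.update π p x c / ((∑ q ∈ s, Function.update π p x q) / #s)))
        (π p) =
      deriv F 1 * ((π c)⁻¹ * ((if c = p then 1 else 0) - if p ∈ s then (#s : ℝ)⁻¹ else 0)) := by
  have hone : Function.update π p (π p) c / ((∑ q ∈ s, Function.update π p (π p) q) / #s) = 1 := by
    rw [Function.update_eq_self, sum_div_card_eq_of_forall_eq hc hs, div_self hπ]
  exact (hF.hasDerivAt.comp_of_eq (π p) (hasDerivAt_div_avg_update hc hs hπ p) hone.symm).deriv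

end Derivative

section ClassAveraging

variable {ι : Type*} [Fintype ι] [DecidableEq ι] {O : ι → Finset ι}

theorem sum_eq_zero_of_forall_sum_class_eq_zero (hO : ∀ p c, p ∈ O c ↔ O p = O c) {v : ι → ℝ}
    (hv : ∀ c, ∑ p ∈ O c, v p = 0) : ∑ c, v c = 0 := by
  rw [← sum_fiberwise univ O v]
  refine sum_eq_zero fun S _ => ?_
  by_cases hS : ∃ c, O c = S
  · obtain ⟨c, rfl⟩ := hS
    have hfiber : ({p | O p = O c} : Finset ι) = O c := by ext p; simp [hO]
    rw [hfiber, hv]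
  · rw [filter_false_of_mem fun p _ hp => hS ⟨p, hp⟩, sum_empty]

noncomputable def classAvgMatrix (O : ι → Finset ι) : Matrix ι ι ℝ :=
  fun c p => if p ∈ O c then (#(O c) : ℝ)⁻¹ else 0

theorem vecMul_classAvgMatrix (hO : ∀ p c, p ∈ O c ↔ O p = O c) (w : ι → ℝ) :
    w ᵥ* classAvgMatrix O = fun p => (∑ c ∈ O p, w c) / #(O p) := by
  ext p
  have hentry : ∀ c, w c * classAvgMatrix O c p = if c ∈ O p then w c / #(O p) else 0 := by
    intro c
    simp only [classAvgMatrix, hO p c, hO c p, eq_comm (a := O c)]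
    split_ifs with h <;> simp [h, div_eq_mul_inv]
  simp only [vecMul, dotProduct, hentry, sum_ite_mem, univ_inter, sum_div]

theorem vecMul_diagonal_inv_mul_one_sub_classAvgMatrix (hO : ∀ p c, p ∈ O c ↔ O p = O c)
    {π v : ι → ℝ} (hπ : ∀ c, ∀ p ∈ O c, π p = π c) (hv : ∀ c, ∑ p ∈ O c, v p = 0) :
    v ᵥ* (diagonal π⁻¹ * (1 - classAvgMatrix O)) = v / π := by
  have hclass : (v / π) ᵥ* classAvgMatrix O = 0 := by
    ext p
    simp only [vecMul_classAvgMatrix hO, Pi.div_apply, Pi.zero_apply]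
    rw [sum_congr rfl fun c hc => by rw [hπ p c hc], ← sum_div, hv, zero_div, zero_div]
  have hdiag : v ᵥ* diagonal π⁻¹ = v / π := by
    ext c; simp [vecMul_diagonal, div_eq_mul_inv]
  rw [← vecMul_vecMul, hdiag, vecMul_sub, vecMul_one, hclass, sub_zero]

end ClassAveraging

theorem div_vecMul_diagonal_sub_vecMulVec {ι : Type*} [Fintype ι] [DecidableEq ι]
    {π : ι → ℝ} (hπ : ∀ c, π c ≠ 0) (v : ι → ℝ) :
    (v / π) ᵥ* (diagonal π - vecMulVec π π) = v - (∑ c, v c) • π := by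
  have hcancel : ∀ c, v c / π c * π c = v c := fun c => div_mul_cancel₀ _ (hπ c)
  rw [vecMul_sub, vecMul_vecMulVec]
  congr 1
  · ext c; simp [vecMul_diagonal, hcancel]
  · simp [dotProduct, hcancel]

/-- Under complete symmetry, `H₁(π) Σ(π) H₂ᵀ(π)` vanishes: for any `v` orthogonal to the
span `S(X)` of the score contrasts `x₁, x₂` and the orbit indicators, one has
`vᵀ J Σ(π) Wᵀ = 0`, where `J` is the Jacobian at `π` of
`G(π)(i,j,k) = F(π(i,j,k)/π^S(i,j,k))`, `Σ(π) = D(π) − π πᵀ`, and `W` has rows `x₁, x₂`. -/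
theorem orthogonality_under_completeSymmetry
    (r : ℕ)
    (u : Fin r → ℝ)
    (f : ℝ → ℝ)
    (hd2 : ∀ x ∈ Set.Ioi (0 : ℝ), DifferentiableAt ℝ (deriv f) x)
    (π : Fin r × Fin r × Fin r → ℝ) (hpos : ∀ c, 0 < π c)
    -- π satisfies complete symmetry:
    (hS : ∀ c : Fin r × Fin r × Fin r, ∀ p ∈ A3 c, π p = π c)
    -- J is the Jacobian matrix at π of the map G (entries are partial derivatives):
    (J : Matrix (Fin r × Fin r × Fin r) (Fin r × Fin r × Fin r) ℝ)
    (hJ : ∀ c p, J c p =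
      deriv (fun x : ℝ =>
          deriv f ((Function.update π p x) c / orbitAvg3 (Function.update π p x) c))
        (π p))
    -- Σ(π) = D(π) − π πᵀ:
    (Sig : Matrix (Fin r × Fin r × Fin r) (Fin r × Fin r × Fin r) ℝ)
    (hSig : ∀ c d, Sig c d = (if c = d then π c else 0) - π c * π d)
    -- W is the 2 × r³ matrix with rows x₁ and x₂:
    (W : Matrix (Fin 2) (Fin r × Fin r × Fin r) ℝ)
    (hW₁ : ∀ c : Fin r × Fin r × Fin r, W 0 c = u c.1 - u c.2.2)
    (hW₂ : ∀ c : Fin r × Fin r × Fin r, W 1 c = u c.2.1 - u c.2.2)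
    -- v is orthogonal to S(X), the span of x₁, x₂ and the orbit indicator vectors:
    (v : Fin r × Fin r × Fin r → ℝ)
    (hv : ∀ w ∈ Submodule.span ℝ
        (({fun c : Fin r × Fin r × Fin r => u c.1 - u c.2.2,
           fun c : Fin r × Fin r × Fin r => u c.2.1 - u c.2.2} :
             Set ((Fin r × Fin r × Fin r) → ℝ)) ∪
          Set.range (fun c₀ : Fin r × Fin r × Fin r =>
            fun c : Fin r × Fin r × Fin r => if c ∈ A3 c₀ then (1 : ℝ) else 0)),
      ∑ c, v c * w c = 0) :
    Matrix.vecMul v (J * Sig * W.transpose) = 0 := by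
  have hA3 : ∀ p c : Fin r × Fin r × Fin r, p ∈ A3 c ↔ A3 p = A3 c := fun _ _ => mem_A3_iff_A3_eq
  have horbit : ∀ c₀, ∑ c ∈ A3 c₀, v c = 0 := fun c₀ => by
    simpa [sum_ite_mem] using hv _ (Submodule.subset_span (Set.mem_union_right _ ⟨c₀, rfl⟩))
  have hx₁ := hv _ (Submodule.subset_span (Set.mem_union_left _ (Set.mem_insert _ _)))
  have hx₂ := hv _ (Submodule.subset_span (Set.mem_union_left _ (Set.mem_insert_of_mem _ rfl)))
  have hJ' : J = deriv (deriv f) 1 • (diagonal π⁻¹ * (1 - classAvgMatrix A3)) := by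
    ext c p
    simp only [hJ, orbitAvg3]
    rw [deriv_comp_div_avg_update (hd2 1 (Set.mem_Ioi.2 one_pos)) (mem_A3_self c) (hS c)
      (hpos c).ne']
    simp [diagonal_mul, one_apply, classAvgMatrix]
  have hSig' : Sig = diagonal π - vecMulVec π π := by
    ext c d; simp [hSig, vecMulVec, diagonal_apply]
  have hWv : W *ᵥ v = 0 := by
    ext i; fin_cases i <;> simp [mulVec, dotProduct, hW₁, hW₂, mul_comm, hx₁, hx₂]
  have hvJ : v ᵥ* J = deriv (deriv f) 1 • (v / π) := by
    rw [hJ', vecMul_smul, vecMul_diagonal_inv_mul_one_sub_classAvgMatrix hA3 hS horbit]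
  have hvJSig : v ᵥ* J ᵥ* Sig = deriv (deriv f) 1 • v := by
    rw [hvJ, smul_vecMul, hSig', div_vecMul_diagonal_sub_vecMulVec (fun c => (hpos c).ne'),
      sum_eq_zero_of_forall_sum_class_eq_zero hA3 horbit, zero_smul, sub_zero]
  rw [← vecMul_vecMul, ← vecMul_vecMul, hvJSig, vecMul_transpose, mulVec_smul, hWv, smul_zero]
end
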